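/- Under the assumptions of the two-proxy setting (Theorem 3), the conditional potential outcome mean satisfies E[min_{w,z} p(w,z | a, X)/(p(w | a, X)·p(z | a, X)) · E[Y | A=a, X] | A=1−a] ≤ E[Y^(a) | A=1−a] ≤ E[max_{w,z} p(w,z | a, X)/(p(w | a, X)·p(z | a, X)) · E[Y | A=a, X] | A=1−a]. -/

import Mathlib

open Finset Real
open scoped Classical

/-- Probability of an event under a pmf `P` on a finite sample space. -/
noncomputable def pr {Ω : Type*} [Fintype Ω] (P : Ω → ℝ) (E : Ω → Prop) : ℝ :=
  ∑ ω, if E ω then P ω else 0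

/-- Expectation of `f` under `P`. -/
noncomputable def ex {Ω : Type*} [Fintype Ω] (P : Ω → ℝ) (f : Ω → ℝ) : ℝ :=
  ∑ ω, P ω * f ω

/-- Conditional expectation `E[f | E]`. -/
noncomputable def ce {Ω : Type*} [Fintype Ω] (P : Ω → ℝ) (f : Ω → ℝ) (E : Ω → Prop) : ℝ :=
  (∑ ω, if E ω then P ω * f ω else 0) / pr P E

/-- Conditional probability `P(E | F)`. -/
noncomputable def cpr {Ω : Type*} [Fintype Ω] (P : Ω → ℝ) (E F : Ω → Prop) : ℝ :=
  pr P (fun ω => E ω ∧ F ω) / pr P F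

/-!
Fix a stratum `(x, u)`. Ignorability and consistency give `E[Y^a | !a, x, u] = E[Y | a, x, u]`,
which the outcome bridge turns into `E[h(W) | a, x, u]`; since `W ⟂ Z` given the stratum,
`E[h(W) q(Z) | a, x, u] = E[h(W) | a, x, u] · E[q(Z) | a, x, u]`, and the treatment bridge makes
the last factor the density ratio `p(u | !a, x) / p(u | a, x)`. Averaging over `u` yields
`E[Y^a | A = !a, X = x] = E[h(W) q(Z) | A = a, X = x]`.

Now expand the right side as `∑_{w,z} OR(w, z) · h(w) p(w | a, x) · q(z) p(z | a, x)` with the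
odds ratio `OR`. The weights are nonnegative and sum to
`E[h(W) | a, x] · E[q(Z) | a, x] = E[Y | a, x] · 1`, so replacing `OR` by its minimum or maximum
bounds the sum; averaging over `X` given `A = !a` gives the two bounds.
-/

noncomputable def exOn {Ω : Type*} [Fintype Ω] (P : Ω → ℝ) (f : Ω → ℝ) (E : Ω → Prop) : ℝ :=
  ∑ ω, if E ω then P ω * f ω else 0

section FiniteProbability

variable {Ω : Type*} [Fintype Ω] (P : Ω → ℝ)

theorem ce_eq_exOn_div (f : Ω → ℝ) (E : Ω → Prop) : ce P f E = exOn P f E / pr P E := rfl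

theorem pr_eq_exOn_one (E : Ω → Prop) : pr P E = exOn P (fun _ => 1) E := by
  simp [pr, exOn]

theorem pr_congr {E F : Ω → Prop} (h : ∀ ω, E ω ↔ F ω) : pr P E = pr P F :=
  congrArg (pr P) (funext fun ω => propext (h ω))

theorem exOn_congr {f g : Ω → ℝ} {E : Ω → Prop} (h : ∀ ω, E ω → f ω = g ω) :
    exOn P f E = exOn P g E :=
  sum_congr rfl fun ω _ => by split_ifs with hω <;> simp [h ω, hω]

theorem pr_nonneg (hP : ∀ ω, 0 ≤ P ω) (E : Ω → Prop) : 0 ≤ pr P E :=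
  sum_nonneg fun ω _ => by split_ifs <;> simp [hP ω]

theorem pr_mono (hP : ∀ ω, 0 ≤ P ω) {E F : Ω → Prop} (h : ∀ ω, E ω → F ω) :
    pr P E ≤ pr P F :=
  sum_le_sum fun ω _ => by split_ifs with hE hF hF <;> simp_all

theorem exOn_eq_sum_fiber {I : Type*} [Fintype I] (V : Ω → I) (f : Ω → ℝ) (E : Ω → Prop) :
    exOn P f E = ∑ v, exOn P f (fun ω => E ω ∧ V ω = v) := by
  unfold exOn
  rw [sum_comm]
  refine sum_congr rfl fun ω _ => ?_
  by_cases hE : E ω <;> simp [hE]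

theorem pr_eq_sum_fiber {I : Type*} [Fintype I] (V : Ω → I) (E : Ω → Prop) :
    pr P E = ∑ v, pr P (fun ω => E ω ∧ V ω = v) := by
  simp only [pr_eq_exOn_one]
  exact exOn_eq_sum_fiber P V _ E

theorem exOn_eq_mul_pr_of_const {f : Ω → ℝ} {E : Ω → Prop} {c : ℝ}
    (hc : ∀ ω, E ω → f ω = c) : exOn P f E = c * pr P E := by
  rw [exOn_congr P hc, pr, mul_sum]
  exact sum_congr rfl fun ω _ => by split_ifs <;> ring

theorem exOn_comp_eq_sum {I : Type*} [Fintype I] (f : I → ℝ) (V : Ω → I) (E : Ω → Prop) :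
    exOn P (fun ω => f (V ω)) E = ∑ v, f v * pr P (fun ω => V ω = v ∧ E ω) := by
  rw [exOn_eq_sum_fiber P V]
  refine sum_congr rfl fun v _ => ?_
  rw [exOn_eq_mul_pr_of_const P (c := f v) fun ω hω => by rw [hω.2]]
  exact congrArg _ (pr_congr P fun ω => and_comm)

theorem exOn_eq_sum_value (f : Ω → ℝ) (E : Ω → Prop) :
    exOn P f E = ∑ y ∈ univ.image f, y * pr P (fun ω => f ω = y ∧ E ω) := by
  unfold exOn pr
  simp_rw [mul_sum]
  rw [sum_comm]
  refine sum_congr rfl fun ω _ => ?_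
  by_cases hE : E ω
  · simp [hE, mul_comm]
  · simp [hE]

theorem exOn_eq_ce_mul_pr (hP : ∀ ω, 0 ≤ P ω) (f : Ω → ℝ) (E : Ω → Prop) :
    exOn P f E = ce P f E * pr P E := by
  by_cases h0 : pr P E = 0
  · have hzero : ∀ ω, E ω → P ω = 0 := fun ω hω => by
      have := (sum_eq_zero_iff_of_nonneg fun ω _ => ?_).1 h0 ω (mem_univ ω)
      · simpa [hω] using this
      · split_ifs <;> simp [hP ω]
    rw [h0, mul_zero]
    exact sum_eq_zero fun ω _ => by split_ifs with hω <;> simp [hzero ω, hω]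
  · exact (div_mul_cancel₀ _ h0).symm

theorem cpr_nonneg (hP : ∀ ω, 0 ≤ P ω) (E F : Ω → Prop) : 0 ≤ cpr P E F :=
  div_nonneg (pr_nonneg P hP _) (pr_nonneg P hP _)

theorem cpr_mono (hP : ∀ ω, 0 ≤ P ω) {E F : Ω → Prop} (h : ∀ ω, E ω → F ω) (G : Ω → Prop) :
    cpr P E G ≤ cpr P F G :=
  div_le_div_of_nonneg_right (pr_mono P hP fun ω hω => ⟨h ω hω.1, hω.2⟩) (pr_nonneg P hP G)

theorem ce_congr_fun {f g : Ω → ℝ} {E : Ω → Prop} (h : ∀ ω, E ω → f ω = g ω) :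
    ce P f E = ce P g E := by
  rw [ce_eq_exOn_div, ce_eq_exOn_div, exOn_congr P h]

theorem ce_comp_eq_sum {I : Type*} [Fintype I] (f : I → ℝ) (V : Ω → I) (E : Ω → Prop) :
    ce P (fun ω => f (V ω)) E = ∑ v, f v * cpr P (fun ω => V ω = v) E := by
  simp only [ce_eq_exOn_div, exOn_comp_eq_sum, sum_div, cpr, mul_div_assoc]

theorem ce_eq_sum_ce_mul_cpr (hP : ∀ ω, 0 ≤ P ω) {I : Type*} [Fintype I] (V : Ω → I)
    (f : Ω → ℝ) (E : Ω → Prop) :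
    ce P f E = ∑ v, ce P f (fun ω => E ω ∧ V ω = v) * cpr P (fun ω => V ω = v) E := by
  rw [ce_eq_exOn_div, exOn_eq_sum_fiber P V, sum_div]
  refine sum_congr rfl fun v _ => ?_
  rw [exOn_eq_ce_mul_pr P hP, cpr, pr_congr P fun ω => and_comm, mul_div_assoc]

theorem ce_eq_ce_of_condIndep (hP : ∀ ω, 0 ≤ P ω) {f : Ω → ℝ} {E G : Ω → Prop}
    (hind : ∀ y, pr P (fun ω => f ω = y ∧ E ω ∧ G ω) * pr P G =
      pr P (fun ω => f ω = y ∧ G ω) * pr P (fun ω => E ω ∧ G ω))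
    (hpos : 0 < pr P (fun ω => E ω ∧ G ω)) :
    ce P f (fun ω => E ω ∧ G ω) = ce P f G := by
  have hG : 0 < pr P G := hpos.trans_le (pr_mono P hP fun ω hω => hω.2)
  have hmul : exOn P f (fun ω => E ω ∧ G ω) * pr P G =
      exOn P f G * pr P (fun ω => E ω ∧ G ω) := by
    simp only [exOn_eq_sum_value P f, sum_mul, mul_assoc, hind]
  rw [ce_eq_exOn_div, ce_eq_exOn_div, div_eq_div_iff hpos.ne' hG.ne', hmul]

theorem cpr_and_eq_mul_of_condIndep {E F G : Ω → Prop}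
    (hind : pr P (fun ω => E ω ∧ F ω ∧ G ω) * pr P G =
      pr P (fun ω => E ω ∧ G ω) * pr P (fun ω => F ω ∧ G ω)) :
    cpr P (fun ω => E ω ∧ F ω) G = cpr P E G * cpr P F G := by
  unfold cpr
  rw [pr_congr P fun ω => and_assoc]
  rcases eq_or_ne (pr P G) 0 with h0 | h0
  · simp [h0]
  · field_simp
    linear_combination hind

theorem ce_comp_mul_comp_eq_sum {I J : Type*} [Fintype I] [Fintype J] (f : I → ℝ) (g : J → ℝ)
    (V : Ω → I) (V' : Ω → J) (G : Ω → Prop) :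
    ce P (fun ω => f (V ω) * g (V' ω)) G =
      ∑ p : I × J, f p.1 * g p.2 * cpr P (fun ω => V ω = p.1 ∧ V' ω = p.2) G := by
  simpa only [Prod.ext_iff] using ce_comp_eq_sum P (fun p : I × J => f p.1 * g p.2)
    (fun ω => (V ω, V' ω)) G

theorem ce_comp_mul_ce_comp {I J : Type*} [Fintype I] [Fintype J] (f : I → ℝ) (g : J → ℝ)
    (V : Ω → I) (V' : Ω → J) (G : Ω → Prop) :
    ce P (fun ω => f (V ω)) G * ce P (fun ω => g (V' ω)) G =
      ∑ p : I × J, f p.1 * cpr P (fun ω => V ω = p.1) G *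
        (g p.2 * cpr P (fun ω => V' ω = p.2) G) := by
  rw [ce_comp_eq_sum, ce_comp_eq_sum, sum_mul_sum, Fintype.sum_prod_type]

theorem ce_comp_mul_comp_of_condIndep {I J : Type*} [Fintype I] [Fintype J] (f : I → ℝ)
    (g : J → ℝ) {V : Ω → I} {V' : Ω → J} {G : Ω → Prop}
    (hind : ∀ v v', pr P (fun ω => V ω = v ∧ V' ω = v' ∧ G ω) * pr P G =
      pr P (fun ω => V ω = v ∧ G ω) * pr P (fun ω => V' ω = v' ∧ G ω)) :
    ce P (fun ω => f (V ω) * g (V' ω)) G =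
      ce P (fun ω => f (V ω)) G * ce P (fun ω => g (V' ω)) G := by
  rw [ce_comp_mul_comp_eq_sum, ce_comp_mul_ce_comp]
  refine sum_congr rfl fun p _ => ?_
  rw [cpr_and_eq_mul_of_condIndep P (hind p.1 p.2)]
  ring

noncomputable def oddsRatio {I J : Type*} (V : Ω → I) (V' : Ω → J) (G : Ω → Prop) (v : I)
    (v' : J) : ℝ :=
  cpr P (fun ω => V ω = v ∧ V' ω = v') G /
    (cpr P (fun ω => V ω = v) G * cpr P (fun ω => V' ω = v') G)

theorem oddsRatio_mul_cpr_mul_cpr (hP : ∀ ω, 0 ≤ P ω) {I J : Type*} (V : Ω → I) (V' : Ω → J)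
    (G : Ω → Prop) (v : I) (v' : J) :
    oddsRatio P V V' G v v' * (cpr P (fun ω => V ω = v) G * cpr P (fun ω => V' ω = v') G) =
      cpr P (fun ω => V ω = v ∧ V' ω = v') G := by
  rcases eq_or_ne (cpr P (fun ω => V ω = v) G * cpr P (fun ω => V' ω = v') G) 0 with h0 | h0
  · have hjoint : cpr P (fun ω => V ω = v ∧ V' ω = v') G = 0 := by
      rcases mul_eq_zero.1 h0 with h | h
      · exact le_antisymm (h ▸ cpr_mono P hP (fun ω hω => hω.1) G) (cpr_nonneg P hP _ _)
      · exact le_antisymm (h ▸ cpr_mono P hP (fun ω hω => hω.2) G) (cpr_nonneg P hP _ _)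
    rw [h0, mul_zero, hjoint]
  · exact div_mul_cancel₀ _ h0

theorem ce_comp_mul_comp_eq_sum_oddsRatio_mul (hP : ∀ ω, 0 ≤ P ω) {I J : Type*} [Fintype I]
    [Fintype J] (f : I → ℝ) (g : J → ℝ) (V : Ω → I) (V' : Ω → J) (G : Ω → Prop) :
    ce P (fun ω => f (V ω) * g (V' ω)) G =
      ∑ p : I × J, oddsRatio P V V' G p.1 p.2 *
        (f p.1 * cpr P (fun ω => V ω = p.1) G * (g p.2 * cpr P (fun ω => V' ω = p.2) G)) := by
  rw [ce_comp_mul_comp_eq_sum]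
  refine sum_congr rfl fun p _ => ?_
  rw [← oddsRatio_mul_cpr_mul_cpr P hP]
  ring

end FiniteProbability

section OrderedSemiring

variable {ι R : Type*} [Semiring R] [LinearOrder R] [IsOrderedRing R] {s : Finset ι}

theorem Finset.inf'_mul_sum_le (hs : s.Nonempty) (c t : ι → R) (ht : ∀ i ∈ s, 0 ≤ t i) :
    s.inf' hs c * ∑ i ∈ s, t i ≤ ∑ i ∈ s, c i * t i := by
  rw [mul_sum]
  exact sum_le_sum fun i hi => mul_le_mul_of_nonneg_right (inf'_le c hi) (ht i hi)

theorem Finset.sum_mul_le_sup'_mul_sum (hs : s.Nonempty) (c t : ι → R) (ht : ∀ i ∈ s, 0 ≤ t i) :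
    ∑ i ∈ s, c i * t i ≤ s.sup' hs c * ∑ i ∈ s, t i := by
  rw [mul_sum]
  exact sum_le_sum fun i hi => mul_le_mul_of_nonneg_right (le_sup' c hi) (ht i hi)

end OrderedSemiring

section OddsRatioBounds

variable {Ω I J : Type*} [Fintype Ω] [Fintype I] [Fintype J] [Nonempty I] [Nonempty J]
  (P : Ω → ℝ) {f : I → ℝ} {g : J → ℝ} (V : Ω → I) (V' : Ω → J) (G : Ω → Prop)

theorem inf'_oddsRatio_mul_le_ce (hP : ∀ ω, 0 ≤ P ω) (hf : ∀ v, 0 ≤ f v) (hg : ∀ v', 0 ≤ g v') :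
    (univ.inf' univ_nonempty fun p : I × J => oddsRatio P V V' G p.1 p.2) *
        (ce P (fun ω => f (V ω)) G * ce P (fun ω => g (V' ω)) G) ≤
      ce P (fun ω => f (V ω) * g (V' ω)) G := by
  rw [ce_comp_mul_ce_comp, ce_comp_mul_comp_eq_sum_oddsRatio_mul P hP]
  exact inf'_mul_sum_le _ _ _ fun _ _ =>
    mul_nonneg (mul_nonneg (hf _) (cpr_nonneg P hP _ _)) (mul_nonneg (hg _) (cpr_nonneg P hP _ _))

theorem ce_le_sup'_oddsRatio_mul (hP : ∀ ω, 0 ≤ P ω) (hf : ∀ v, 0 ≤ f v) (hg : ∀ v', 0 ≤ g v') :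
    ce P (fun ω => f (V ω) * g (V' ω)) G ≤
      (univ.sup' univ_nonempty fun p : I × J => oddsRatio P V V' G p.1 p.2) *
        (ce P (fun ω => f (V ω)) G * ce P (fun ω => g (V' ω)) G) := by
  rw [ce_comp_mul_ce_comp, ce_comp_mul_comp_eq_sum_oddsRatio_mul P hP]
  exact sum_mul_le_sup'_mul_sum _ _ _ fun _ _ =>
    mul_nonneg (mul_nonneg (hf _) (cpr_nonneg P hP _ _)) (mul_nonneg (hg _) (cpr_nonneg P hP _ _))

end OddsRatioBounds

section ProximalIdentification

variable {Ω U X W Z : Type*} [Fintype Ω] {P : Ω → ℝ} {Uv : Ω → U} {Xv : Ω → X}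
  {Wv : Ω → W} {Zv : Ω → Z} {Av : Ω → Bool} {Yv Ya : Ω → ℝ} {a : Bool}

theorem pr_treatment_covariate_pos [Nonempty U] (hP : ∀ ω, 0 ≤ P ω)
    (hpos : ∀ (a' : Bool) (x : X) (u : U),
      0 < pr P fun ω => Av ω = a' ∧ Xv ω = x ∧ Uv ω = u) (a' : Bool) (x : X) :
    0 < pr P fun ω => Av ω = a' ∧ Xv ω = x :=
  (hpos a' x (Classical.arbitrary U)).trans_le (pr_mono P hP fun _ hω => ⟨hω.1, hω.2.1⟩)

theorem ce_potentialOutcome_stratum (hP : ∀ ω, 0 ≤ P ω)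
    (hYaA : ∀ (y : ℝ) (a' : Bool) (x : X) (u : U),
      pr P (fun ω => Ya ω = y ∧ Av ω = a' ∧ Xv ω = x ∧ Uv ω = u) *
          pr P (fun ω => Xv ω = x ∧ Uv ω = u) =
        pr P (fun ω => Ya ω = y ∧ Xv ω = x ∧ Uv ω = u) *
          pr P (fun ω => Av ω = a' ∧ Xv ω = x ∧ Uv ω = u))
    (hpos : ∀ (a' : Bool) (x : X) (u : U),
      0 < pr P fun ω => Av ω = a' ∧ Xv ω = x ∧ Uv ω = u)
    (hcons : ∀ ω, Av ω = a → Yv ω = Ya ω) (h : W → Bool → X → ℝ)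
    (hbridgeh : ∀ (a' : Bool) (x : X) (u : U),
      ce P Yv (fun ω => Av ω = a' ∧ Xv ω = x ∧ Uv ω = u) =
        ce P (fun ω => h (Wv ω) a' (Xv ω)) (fun ω => Av ω = a' ∧ Xv ω = x ∧ Uv ω = u))
    (x : X) (u : U) :
    ce P Ya (fun ω => Av ω = !a ∧ Xv ω = x ∧ Uv ω = u) =
      ce P (fun ω => h (Wv ω) a x) (fun ω => Av ω = a ∧ Xv ω = x ∧ Uv ω = u) :=
  calc ce P Ya (fun ω => Av ω = !a ∧ Xv ω = x ∧ Uv ω = u)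
      = ce P Ya (fun ω => Xv ω = x ∧ Uv ω = u) :=
        ce_eq_ce_of_condIndep P hP (hYaA · (!a) x u) (hpos (!a) x u)
    _ = ce P Ya (fun ω => Av ω = a ∧ Xv ω = x ∧ Uv ω = u) :=
        (ce_eq_ce_of_condIndep P hP (hYaA · a x u) (hpos a x u)).symm
    _ = ce P Yv (fun ω => Av ω = a ∧ Xv ω = x ∧ Uv ω = u) :=
        ce_congr_fun P fun ω hω => (hcons ω hω.1).symm
    _ = _ := (hbridgeh a x u).trans (ce_congr_fun P fun ω hω => by rw [hω.2.1])

theorem exOn_treatmentBridge_stratum (hP : ∀ ω, 0 ≤ P ω)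
    (hpos : ∀ (a' : Bool) (x : X) (u : U),
      0 < pr P fun ω => Av ω = a' ∧ Xv ω = x ∧ Uv ω = u)
    (q : Z → Bool → X → ℝ)
    (hbridgeq : ∀ (a' : Bool) (x : X) (u : U),
      ce P (fun ω => q (Zv ω) a' (Xv ω)) (fun ω => Av ω = a' ∧ Xv ω = x ∧ Uv ω = u) =
        cpr P (fun ω => Uv ω = u) (fun ω => Av ω = !a' ∧ Xv ω = x) /
          cpr P (fun ω => Uv ω = u) (fun ω => Av ω = a' ∧ Xv ω = x))
    (x : X) (u : U) :
    exOn P (fun ω => q (Zv ω) a x) (fun ω => Av ω = a ∧ Xv ω = x ∧ Uv ω = u) =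
      pr P (fun ω => Av ω = !a ∧ Xv ω = x ∧ Uv ω = u) * pr P (fun ω => Av ω = a ∧ Xv ω = x) /
        pr P (fun ω => Av ω = !a ∧ Xv ω = x) := by
  have : Nonempty U := ⟨u⟩
  have hxu := (hpos a x u).ne'
  have hx := (pr_treatment_covariate_pos hP hpos a x).ne'
  have hx' := (pr_treatment_covariate_pos hP hpos (!a) x).ne'
  have hcpr (a' : Bool) : cpr P (fun ω => Uv ω = u) (fun ω => Av ω = a' ∧ Xv ω = x) =
      pr P (fun ω => Av ω = a' ∧ Xv ω = x ∧ Uv ω = u) / pr P (fun ω => Av ω = a' ∧ Xv ω = x) :=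
    congrArg (· / _) (pr_congr P fun ω => and_rotate)
  have hq : ce P (fun ω => q (Zv ω) a x) (fun ω => Av ω = a ∧ Xv ω = x ∧ Uv ω = u) =
      ce P (fun ω => q (Zv ω) a (Xv ω)) (fun ω => Av ω = a ∧ Xv ω = x ∧ Uv ω = u) :=
    ce_congr_fun P fun ω hω => by rw [hω.2.1]
  rw [exOn_eq_ce_mul_pr P hP, hq, hbridgeq a x u, hcpr, hcpr]
  field_simp

theorem ce_potentialOutcome_eq_ce_bridge_mul_bridge [Fintype U] [Nonempty U] (hP : ∀ ω, 0 ≤ P ω)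
    (hYaA : ∀ (y : ℝ) (a' : Bool) (x : X) (u : U),
      pr P (fun ω => Ya ω = y ∧ Av ω = a' ∧ Xv ω = x ∧ Uv ω = u) *
          pr P (fun ω => Xv ω = x ∧ Uv ω = u) =
        pr P (fun ω => Ya ω = y ∧ Xv ω = x ∧ Uv ω = u) *
          pr P (fun ω => Av ω = a' ∧ Xv ω = x ∧ Uv ω = u))
    (hpos : ∀ (a' : Bool) (x : X) (u : U),
      0 < pr P fun ω => Av ω = a' ∧ Xv ω = x ∧ Uv ω = u)
    (hcons : ∀ ω, Av ω = a → Yv ω = Ya ω) (h : W → Bool → X → ℝ)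
    (hbridgeh : ∀ (a' : Bool) (x : X) (u : U),
      ce P Yv (fun ω => Av ω = a' ∧ Xv ω = x ∧ Uv ω = u) =
        ce P (fun ω => h (Wv ω) a' (Xv ω)) (fun ω => Av ω = a' ∧ Xv ω = x ∧ Uv ω = u))
    (q : Z → Bool → X → ℝ)
    (hbridgeq : ∀ (a' : Bool) (x : X) (u : U),
      ce P (fun ω => q (Zv ω) a' (Xv ω)) (fun ω => Av ω = a' ∧ Xv ω = x ∧ Uv ω = u) =
        cpr P (fun ω => Uv ω = u) (fun ω => Av ω = !a' ∧ Xv ω = x) /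
          cpr P (fun ω => Uv ω = u) (fun ω => Av ω = a' ∧ Xv ω = x))
    [Fintype W] [Fintype Z]
    (hWZ : ∀ (w : W) (z : Z) (a' : Bool) (x : X) (u : U),
      pr P (fun ω => Wv ω = w ∧ Zv ω = z ∧ Av ω = a' ∧ Xv ω = x ∧ Uv ω = u) *
          pr P (fun ω => Av ω = a' ∧ Xv ω = x ∧ Uv ω = u) =
        pr P (fun ω => Wv ω = w ∧ Av ω = a' ∧ Xv ω = x ∧ Uv ω = u) *
          pr P (fun ω => Zv ω = z ∧ Av ω = a' ∧ Xv ω = x ∧ Uv ω = u))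
    (x : X) :
    ce P Ya (fun ω => Av ω = !a ∧ Xv ω = x) =
      ce P (fun ω => h (Wv ω) a x * q (Zv ω) a x) (fun ω => Av ω = a ∧ Xv ω = x) := by
  have hx' := (pr_treatment_covariate_pos hP hpos (!a) x).ne'
  have hstratum (u : U) :
      exOn P Ya (fun ω => Av ω = !a ∧ Xv ω = x ∧ Uv ω = u) * pr P (fun ω => Av ω = a ∧ Xv ω = x) =
        exOn P (fun ω => h (Wv ω) a x * q (Zv ω) a x)
            (fun ω => Av ω = a ∧ Xv ω = x ∧ Uv ω = u) * pr P (fun ω => Av ω = !a ∧ Xv ω = x) := by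
    rw [exOn_eq_ce_mul_pr P hP Ya, ce_potentialOutcome_stratum hP hYaA hpos hcons h hbridgeh,
      exOn_eq_ce_mul_pr P hP (fun ω => h (Wv ω) a x * q (Zv ω) a x),
      ce_comp_mul_comp_of_condIndep P (fun w => h w a x) (fun z => q z a x) (hWZ · · a x u),
      mul_assoc (ce P (fun ω => h (Wv ω) a x) _) (ce P (fun ω => q (Zv ω) a x) _),
      ← exOn_eq_ce_mul_pr P hP (fun ω => q (Zv ω) a x),
      exOn_treatmentBridge_stratum hP hpos q hbridgeq]
    field_simp
  have hmul : exOn P Ya (fun ω => Av ω = !a ∧ Xv ω = x) * pr P (fun ω => Av ω = a ∧ Xv ω = x) =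
      exOn P (fun ω => h (Wv ω) a x * q (Zv ω) a x) (fun ω => Av ω = a ∧ Xv ω = x) *
        pr P (fun ω => Av ω = !a ∧ Xv ω = x) := by
    rw [exOn_eq_sum_fiber P Uv, exOn_eq_sum_fiber P Uv, sum_mul, sum_mul]
    simp only [and_assoc]
    exact sum_congr rfl fun u _ => hstratum u
  rw [ce_eq_exOn_div, ce_eq_exOn_div, div_eq_div_iff hx'
    (pr_treatment_covariate_pos hP hpos a x).ne', hmul]

theorem ce_outcomeBridge [Fintype U] (hP : ∀ ω, 0 ≤ P ω) (h : W → Bool → X → ℝ)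
    (hbridgeh : ∀ (a' : Bool) (x : X) (u : U),
      ce P Yv (fun ω => Av ω = a' ∧ Xv ω = x ∧ Uv ω = u) =
        ce P (fun ω => h (Wv ω) a' (Xv ω)) (fun ω => Av ω = a' ∧ Xv ω = x ∧ Uv ω = u))
    (x : X) :
    ce P (fun ω => h (Wv ω) a x) (fun ω => Av ω = a ∧ Xv ω = x) =
      ce P Yv (fun ω => Av ω = a ∧ Xv ω = x) := by
  rw [ce_eq_exOn_div, ce_eq_exOn_div, exOn_eq_sum_fiber P Uv, exOn_eq_sum_fiber P Uv]
  simp only [and_assoc]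
  refine congrArg (· / _) (sum_congr rfl fun u _ => ?_)
  rw [exOn_eq_ce_mul_pr P hP, exOn_eq_ce_mul_pr P hP Yv, hbridgeh a x u]
  exact congrArg (· * _) (ce_congr_fun P fun ω hω => by rw [hω.2.1])

theorem ce_treatmentBridge [Fintype U] [Nonempty U] (hP : ∀ ω, 0 ≤ P ω)
    (hpos : ∀ (a' : Bool) (x : X) (u : U),
      0 < pr P fun ω => Av ω = a' ∧ Xv ω = x ∧ Uv ω = u)
    (q : Z → Bool → X → ℝ)
    (hbridgeq : ∀ (a' : Bool) (x : X) (u : U),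
      ce P (fun ω => q (Zv ω) a' (Xv ω)) (fun ω => Av ω = a' ∧ Xv ω = x ∧ Uv ω = u) =
        cpr P (fun ω => Uv ω = u) (fun ω => Av ω = !a' ∧ Xv ω = x) /
          cpr P (fun ω => Uv ω = u) (fun ω => Av ω = a' ∧ Xv ω = x))
    (x : X) :
    ce P (fun ω => q (Zv ω) a x) (fun ω => Av ω = a ∧ Xv ω = x) = 1 := by
  have hsum := pr_eq_sum_fiber P Uv (fun ω => Av ω = !a ∧ Xv ω = x)
  rw [ce_eq_exOn_div, exOn_eq_sum_fiber P Uv,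
    div_eq_one_iff_eq (pr_treatment_covariate_pos hP hpos a x).ne']
  simp only [and_assoc] at hsum ⊢
  simp only [exOn_treatmentBridge_stratum hP hpos q hbridgeq, ← sum_div, ← sum_mul, ← hsum]
  field_simp [(pr_treatment_covariate_pos hP hpos (!a) x).ne']

end ProximalIdentification

theorem two_proxy_bounds_general {Ω U X W Z : Type*} [Fintype Ω] [Fintype U] [Fintype X]
    [Fintype W] [Fintype Z] [Nonempty W] [Nonempty Z]
    (P : Ω → ℝ) (hP : ∀ ω, 0 ≤ P ω)
    (Uv : Ω → U) (Xv : Ω → X) (Wv : Ω → W) (Zv : Ω → Z) (Av : Ω → Bool) (Yv : Ω → ℝ)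
    (a : Bool) (Ya : Ω → ℝ)
    -- (i) Y^(a) ⟂ A | (X,U)
    (hYaA : ∀ (y : ℝ) (a' : Bool) (x : X) (u : U),
      pr P (fun ω => Ya ω = y ∧ Av ω = a' ∧ Xv ω = x ∧ Uv ω = u) *
          pr P (fun ω => Xv ω = x ∧ Uv ω = u) =
        pr P (fun ω => Ya ω = y ∧ Xv ω = x ∧ Uv ω = u) *
          pr P (fun ω => Av ω = a' ∧ Xv ω = x ∧ Uv ω = u))
    -- positivity
    (hpos : ∀ (a' : Bool) (x : X) (u : U),
      0 < pr P fun ω => Av ω = a' ∧ Xv ω = x ∧ Uv ω = u)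
    -- consistency
    (hcons : ∀ ω, Av ω = a → Yv ω = Ya ω)
    -- (ii) outcome bridge function h
    (h : W → Bool → X → ℝ) (hh : ∀ w a' x, 0 ≤ h w a' x)
    (hbridgeh : ∀ (a' : Bool) (x : X) (u : U),
      ce P Yv (fun ω => Av ω = a' ∧ Xv ω = x ∧ Uv ω = u) =
        ce P (fun ω => h (Wv ω) a' (Xv ω)) (fun ω => Av ω = a' ∧ Xv ω = x ∧ Uv ω = u))
    -- (iii) treatment bridge function q
    (q : Z → Bool → X → ℝ) (hq : ∀ z a' x, 0 ≤ q z a' x)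
    (hbridgeq : ∀ (a' : Bool) (x : X) (u : U),
      ce P (fun ω => q (Zv ω) a' (Xv ω)) (fun ω => Av ω = a' ∧ Xv ω = x ∧ Uv ω = u) =
        cpr P (fun ω => Uv ω = u) (fun ω => Av ω = !a' ∧ Xv ω = x) /
          cpr P (fun ω => Uv ω = u) (fun ω => Av ω = a' ∧ Xv ω = x))
    -- (iv) W ⟂ Z | (A, X, U)
    (hWZ : ∀ (w : W) (z : Z) (a' : Bool) (x : X) (u : U),
      pr P (fun ω => Wv ω = w ∧ Zv ω = z ∧ Av ω = a' ∧ Xv ω = x ∧ Uv ω = u) *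
          pr P (fun ω => Av ω = a' ∧ Xv ω = x ∧ Uv ω = u) =
        pr P (fun ω => Wv ω = w ∧ Av ω = a' ∧ Xv ω = x ∧ Uv ω = u) *
          pr P (fun ω => Zv ω = z ∧ Av ω = a' ∧ Xv ω = x ∧ Uv ω = u)) :
    (∑ x : X,
        (univ.inf' univ_nonempty fun wz : W × Z =>
            cpr P (fun ω => Wv ω = wz.1 ∧ Zv ω = wz.2) (fun ω => Av ω = a ∧ Xv ω = x) /
              (cpr P (fun ω => Wv ω = wz.1) (fun ω => Av ω = a ∧ Xv ω = x) *
                cpr P (fun ω => Zv ω = wz.2) (fun ω => Av ω = a ∧ Xv ω = x))) *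
          ce P Yv (fun ω => Av ω = a ∧ Xv ω = x) *
          cpr P (fun ω => Xv ω = x) (fun ω => Av ω = !a)) ≤
      ce P Ya (fun ω => Av ω = !a) ∧
    ce P Ya (fun ω => Av ω = !a) ≤
      ∑ x : X,
        (univ.sup' univ_nonempty fun wz : W × Z =>
            cpr P (fun ω => Wv ω = wz.1 ∧ Zv ω = wz.2) (fun ω => Av ω = a ∧ Xv ω = x) /
              (cpr P (fun ω => Wv ω = wz.1) (fun ω => Av ω = a ∧ Xv ω = x) *
                cpr P (fun ω => Zv ω = wz.2) (fun ω => Av ω = a ∧ Xv ω = x))) *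
          ce P Yv (fun ω => Av ω = a ∧ Xv ω = x) *
          cpr P (fun ω => Xv ω = x) (fun ω => Av ω = !a) := by
  rcases isEmpty_or_nonempty Ω with hΩ | hΩ
  · simp [ce, cpr, pr]
  have : Nonempty U := hΩ.map Uv
  have hbounds (x : X) :
      (univ.inf' univ_nonempty fun p : W × Z =>
          oddsRatio P Wv Zv (fun ω => Av ω = a ∧ Xv ω = x) p.1 p.2) *
          ce P Yv (fun ω => Av ω = a ∧ Xv ω = x) ≤ ce P Ya (fun ω => Av ω = !a ∧ Xv ω = x) ∧
        ce P Ya (fun ω => Av ω = !a ∧ Xv ω = x) ≤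
          (univ.sup' univ_nonempty fun p : W × Z =>
            oddsRatio P Wv Zv (fun ω => Av ω = a ∧ Xv ω = x) p.1 p.2) *
            ce P Yv (fun ω => Av ω = a ∧ Xv ω = x) := by
    rw [ce_potentialOutcome_eq_ce_bridge_mul_bridge hP hYaA hpos hcons h hbridgeh q hbridgeq hWZ x,
      ← ce_outcomeBridge hP h hbridgeh x, ← mul_one (ce P (fun ω => h (Wv ω) a x) _),
      ← ce_treatmentBridge hP hpos q hbridgeq x]
    exact ⟨inf'_oddsRatio_mul_le_ce P Wv Zv _ hP (hh · a x) (hq · a x),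
      ce_le_sup'_oddsRatio_mul P Wv Zv _ hP (hh · a x) (hq · a x)⟩
  rw [ce_eq_sum_ce_mul_cpr P hP Xv]
  exact ⟨sum_le_sum fun x _ => mul_le_mul_of_nonneg_right (hbounds x).1 (cpr_nonneg P hP _ _),
    sum_le_sum fun x _ => mul_le_mul_of_nonneg_right (hbounds x).2 (cpr_nonneg P hP _ _)⟩

/-- Theorem 3: two-proxy partial identification bounds on
`E[Y^(a) | A=1−a]` via the odds ratio `p(w,z | a,X)/(p(w | a,X)·p(z | a,X))`. -/
theorem two_proxy_bounds {Ω U X W Z : Type*} [Fintype Ω] [Fintype U] [Fintype X]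
    [Fintype W] [Fintype Z] [Nonempty W] [Nonempty Z]
    (P : Ω → ℝ) (hP : ∀ ω, 0 ≤ P ω) (hP1 : ∑ ω, P ω = 1)
    (Uv : Ω → U) (Xv : Ω → X) (Wv : Ω → W) (Zv : Ω → Z) (Av : Ω → Bool) (Yv : Ω → ℝ)
    (a : Bool) (Ya : Ω → ℝ)
    (hY : ∀ ω, 0 ≤ Yv ω)
    -- (i) Y^(a) ⟂ A | (X,U)
    (hYaA : ∀ (y : ℝ) (a' : Bool) (x : X) (u : U),
      pr P (fun ω => Ya ω = y ∧ Av ω = a' ∧ Xv ω = x ∧ Uv ω = u) *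
          pr P (fun ω => Xv ω = x ∧ Uv ω = u) =
        pr P (fun ω => Ya ω = y ∧ Xv ω = x ∧ Uv ω = u) *
          pr P (fun ω => Av ω = a' ∧ Xv ω = x ∧ Uv ω = u))
    -- positivity
    (hpos : ∀ (a' : Bool) (x : X) (u : U),
      0 < pr P fun ω => Av ω = a' ∧ Xv ω = x ∧ Uv ω = u)
    -- consistency
    (hcons : ∀ ω, Av ω = a → Yv ω = Ya ω)
    -- (ii) outcome bridge function h
    (h : W → Bool → X → ℝ) (hh : ∀ w a' x, 0 ≤ h w a' x)
    (hbridgeh : ∀ (a' : Bool) (x : X) (u : U),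
      ce P Yv (fun ω => Av ω = a' ∧ Xv ω = x ∧ Uv ω = u) =
        ce P (fun ω => h (Wv ω) a' (Xv ω)) (fun ω => Av ω = a' ∧ Xv ω = x ∧ Uv ω = u))
    -- (iii) treatment bridge function q
    (q : Z → Bool → X → ℝ) (hq : ∀ z a' x, 0 ≤ q z a' x)
    (hbridgeq : ∀ (a' : Bool) (x : X) (u : U),
      ce P (fun ω => q (Zv ω) a' (Xv ω)) (fun ω => Av ω = a' ∧ Xv ω = x ∧ Uv ω = u) =
        cpr P (fun ω => Uv ω = u) (fun ω => Av ω = !a' ∧ Xv ω = x) /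
          cpr P (fun ω => Uv ω = u) (fun ω => Av ω = a' ∧ Xv ω = x))
    -- (iv) W ⟂ Z | (A, X, U)
    (hWZ : ∀ (w : W) (z : Z) (a' : Bool) (x : X) (u : U),
      pr P (fun ω => Wv ω = w ∧ Zv ω = z ∧ Av ω = a' ∧ Xv ω = x ∧ Uv ω = u) *
          pr P (fun ω => Av ω = a' ∧ Xv ω = x ∧ Uv ω = u) =
        pr P (fun ω => Wv ω = w ∧ Av ω = a' ∧ Xv ω = x ∧ Uv ω = u) *
          pr P (fun ω => Zv ω = z ∧ Av ω = a' ∧ Xv ω = x ∧ Uv ω = u)) :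
    (∑ x : X,
        (univ.inf' univ_nonempty fun wz : W × Z =>
            cpr P (fun ω => Wv ω = wz.1 ∧ Zv ω = wz.2) (fun ω => Av ω = a ∧ Xv ω = x) /
              (cpr P (fun ω => Wv ω = wz.1) (fun ω => Av ω = a ∧ Xv ω = x) *
                cpr P (fun ω => Zv ω = wz.2) (fun ω => Av ω = a ∧ Xv ω = x))) *
          ce P Yv (fun ω => Av ω = a ∧ Xv ω = x) *
          cpr P (fun ω => Xv ω = x) (fun ω => Av ω = !a)) ≤
      ce P Ya (fun ω => Av ω = !a) ∧
    ce P Ya (fun ω => Av ω = !a) ≤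
      ∑ x : X,
        (univ.sup' univ_nonempty fun wz : W × Z =>
            cpr P (fun ω => Wv ω = wz.1 ∧ Zv ω = wz.2) (fun ω => Av ω = a ∧ Xv ω = x) /
              (cpr P (fun ω => Wv ω = wz.1) (fun ω => Av ω = a ∧ Xv ω = x) *
                cpr P (fun ω => Zv ω = wz.2) (fun ω => Av ω = a ∧ Xv ω = x))) *
          ce P Yv (fun ω => Av ω = a ∧ Xv ω = x) *
          cpr P (fun ω => Xv ω = x) (fun ω => Av ω = !a) :=
  two_proxy_bounds_general P hP Uv Xv Wv Zv Av Yv a Ya hYaA hpos hcons h hh hbridgeh q hq hbridgeq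
    hWZ
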